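/- arXiv:2307.14281 — 4 statements merged into one kernel-verified Lean document; each statement's English description precedes it below -/
import Mathlib

section
/- Let p, ℓ be natural numbers and let 𝒫 be a partition of [p]×[2]×[2] with classes P₁, ..., P_t. Define the p×t integer matrix M by M(e, j) = Σ_{(s,v) ∈ [2]×[2]} (−1)^s · [(e,s,v) ∈ P_j]. Then |As(𝒫,=,ℓ)| equals the number of vectors x ∈ [ℓ]^t with pairwise distinct coordinates satisfying Mx = 0. Consequently, 𝒫 is satisfiable if and only if the homogeneous system Mx = 0 has a solution x ∈ ℕ^t with pairwise distinct coordinates. -/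
/-- The index set `[p] × [2] × [2]` of the terms of a system of `p` equations,
each with two sides of two terms each. -/
abbrev Idx (p : ℕ) : Type := Fin p × Fin 2 × Fin 2

/-- `β` and `γ` lie in a common class of `𝔓`. -/
def MemSameClass {α : Type*} (𝔓 : Set (Set α)) (β γ : α) : Prop :=
  ∃ P ∈ 𝔓, β ∈ P ∧ γ ∈ P

/-- The assignment `τ` induces the partition `𝔓`: two indices get equal values
iff they lie in a common class of `𝔓`. -/
def Induces {α : Type*} (τ : α → ℕ) (𝔓 : Set (Set α)) : Prop :=
  ∀ β γ, τ β = τ γ ↔ MemSameClass 𝔓 β γ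

/-- `As([p],=,ℓ)`: assignments with all values in `[ℓ]` satisfying
`τ(e,0,0)+τ(e,0,1) = τ(e,1,0)+τ(e,1,1)` for every equation `e`. -/
def AsEq (p ℓ : ℕ) : Set (Idx p → ℕ) :=
  {τ | (∀ γ, τ γ < ℓ) ∧
    ∀ e : Fin p, τ (e, 0, 0) + τ (e, 0, 1) = τ (e, 1, 0) + τ (e, 1, 1)}

/-- `As(𝔓,=,ℓ)`: the assignments in `As([p],=,ℓ)` that induce the partition `𝔓`. -/
def AsPart (p ℓ : ℕ) (𝔓 : Set (Set (Idx p))) : Set (Idx p → ℕ) :=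
  {τ ∈ AsEq p ℓ | Induces τ 𝔓}

/-- A partition `𝔓` is satisfiable if `As(𝔓,=,ℓ)` is nonempty for some `ℓ`. -/
def Satisfiable (p : ℕ) (𝔓 : Set (Set (Idx p))) : Prop :=
  ∃ ℓ : ℕ, (AsPart p ℓ 𝔓).Nonempty

/-- The restriction of `𝔓` to `F ⊆ [p]`: the nonempty intersections of classes
of `𝔓` with `F × [2] × [2]`. -/
def restrictPart (p : ℕ) (F : Set (Fin p)) (𝔓 : Set (Set (Idx p))) : Set (Set (Idx p)) :=
  {Q | Q.Nonempty ∧ ∃ P ∈ 𝔓, Q = P ∩ {x : Idx p | x.1 ∈ F}}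

/-- A collection of classes is even if every class has even cardinality. -/
def IsEvenPart (p : ℕ) (𝔓 : Set (Set (Idx p))) : Prop :=
  ∀ P ∈ 𝔓, Even P.ncard

/-- Globally even, locally odd: `𝔓` is even but no restriction `𝔓_{{e}}` is even. -/
def GELO (p : ℕ) (𝔓 : Set (Set (Idx p))) : Prop :=
  IsEvenPart p 𝔓 ∧ ∀ e : Fin p, ¬ IsEvenPart p (restrictPart p {e} 𝔓)

/-- `ConPart(p)`: the contributory partitions of `[p] × [2] × [2]`, i.e. the
partitions that are globally even, locally odd and satisfiable. -/
def ConPart (p : ℕ) : Set (Set (Set (Idx p))) :=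
  {𝔓 | Setoid.IsPartition 𝔓 ∧ GELO p 𝔓 ∧ Satisfiable p 𝔓}

/-- The group `W^(p)` of permutations of `[p] × [2] × [2]` that permute the
equations, the sides of each equation, and the places on each side. -/
def Wgroup (p : ℕ) : Set (Equiv.Perm (Idx p)) :=
  {π | ∃ (ε : Equiv.Perm (Fin p)) (σ : Fin p → Equiv.Perm (Fin 2))
      (Φ : Fin p → Fin 2 → Equiv.Perm (Fin 2)),
    ∀ x : Idx p, π x = (ε x.1, σ (ε x.1) x.2.1, Φ (ε x.1) (σ (ε x.1) x.2.1) x.2.2)}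

/-- The action of a permutation `π` on a partition: `π(𝔓) = {π(P) : P ∈ 𝔓}`. -/
def mapPart (p : ℕ) (π : Equiv.Perm (Idx p)) (𝔓 : Set (Set (Idx p))) : Set (Set (Idx p)) :=
  (fun P => (π : Idx p → Idx p) '' P) '' 𝔓

/-- `𝔓` and `𝔔` are isomorphic if `𝔔 = π(𝔓)` for some `π ∈ W^(p)`. -/
def Isomorphic (p : ℕ) (𝔓 𝔔 : Set (Set (Idx p))) : Prop :=
  ∃ π ∈ Wgroup p, 𝔔 = mapPart p π 𝔓

/-- `Isom(p)`: the set of isomorphism classes of contributory partitions. -/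
def IsomCls (p : ℕ) : Set (Set (Set (Set (Idx p)))) :=
  {C | ∃ 𝔓 ∈ ConPart p, C = {𝔔 | Isomorphic p 𝔓 𝔔}}

open scoped Classical in
/-- For a partition with classes `P 0, …, P (t-1)` and associated monochrome
matrix `M`, the number `|As(𝔓,=,ℓ)|` equals the number of solutions
`x ∈ [ℓ]^t` of `Mx = 0` with pairwise distinct coordinates; consequently, the
partition is satisfiable iff `Mx = 0` has a solution in `ℕ^t` with pairwise
distinct coordinates. -/
theorem ncard_AsPart_eq_solutions (p ℓ t : ℕ) (P : Fin t → Set (Idx p))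
    (hinj : Function.Injective P) (hpart : Setoid.IsPartition (Set.range P))
    (M : Fin p → Fin t → ℤ)
    (hM : ∀ (e : Fin p) (j : Fin t),
      M e j = ∑ s : Fin 2, ∑ v : Fin 2,
        (-1) ^ (s : ℕ) * (if (e, s, v) ∈ P j then 1 else 0)) :
    (AsPart p ℓ (Set.range P)).ncard =
      Set.ncard {x : Fin t → ℕ | (∀ j, x j < ℓ) ∧ Function.Injective x ∧
        ∀ e : Fin p, ∑ j, M e j * (x j : ℤ) = 0} ∧
    (Satisfiable p (Set.range P) ↔
      ∃ x : Fin t → ℕ, Function.Injective x ∧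
        ∀ e : Fin p, ∑ j, M e j * (x j : ℤ) = 0) := by
  classical
  have hne : ∀ j, (P j).Nonempty := fun j => by
    rcases Set.eq_empty_or_nonempty (P j) with h | h
    · exact absurd (h ▸ Set.mem_range_self j) hpart.1
    · exact h
  choose rep hrep using hne
  have hmem_uniq : ∀ (β : Idx p) (j j' : Fin t), β ∈ P j → β ∈ P j' → j = j' := by
    intro β j j' h h'
    obtain ⟨Q, -, huniq⟩ := hpart.2 β
    exact hinj ((huniq _ ⟨Set.mem_range_self j, h⟩).trans
      (huniq _ ⟨Set.mem_range_self j', h'⟩).symm)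
  have hidx0 : ∀ β : Idx p, ∃ j, β ∈ P j := by
    intro β
    obtain ⟨Q, ⟨⟨j, rfl⟩, hβ⟩, -⟩ := hpart.2 β
    exact ⟨j, hβ⟩
  choose idx hidxmem using hidx0
  have hidxrep : ∀ j, idx (rep j) = j := fun j => hmem_uniq _ _ _ (hidxmem _) (hrep j)
  set f : (Idx p → ℕ) → (Fin t → ℕ) := fun τ j => τ (rep j) with hf
  -- key sum computation
  have hsum : ∀ (x : Fin t → ℕ) (e : Fin p),
      ∑ j, M e j * (x j : ℤ)
        = ((x (idx (e,0,0)) : ℤ) + x (idx (e,0,1))) - ((x (idx (e,1,0)) : ℤ) + x (idx (e,1,1))) := by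
    intro x e
    have hind : ∀ (s v : Fin 2) (j : Fin t),
        (if (e, s, v) ∈ P j then (1:ℤ) else 0) = if j = idx (e,s,v) then 1 else 0 := by
      intro s v j
      by_cases h : (e,s,v) ∈ P j
      · simp [h, hmem_uniq _ _ _ h (hidxmem (e,s,v)), hidxmem (e,s,v)]
      · have hj : j ≠ idx (e,s,v) := fun hj => h (hj ▸ hidxmem (e,s,v))
        simp [h, hj]
    have step1 : ∑ j, M e j * (x j : ℤ)
        = ∑ j, ∑ s : Fin 2, ∑ v : Fin 2,
            ((-1:ℤ))^(s:ℕ) * (if j = idx (e,s,v) then (1:ℤ) else 0) * x j := by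
      refine Finset.sum_congr rfl fun j _ => ?_
      rw [hM e j, Finset.sum_mul]
      refine Finset.sum_congr rfl fun s _ => ?_
      rw [Finset.sum_mul]
      refine Finset.sum_congr rfl fun v _ => ?_
      rw [hind s v j]
    have step3 : ∑ j, ∑ s : Fin 2, ∑ v : Fin 2,
        ((-1:ℤ))^(s:ℕ) * (if j = idx (e,s,v) then (1:ℤ) else 0) * x j
        = ∑ s : Fin 2, ∑ v : Fin 2, ∑ j,
        ((-1:ℤ))^(s:ℕ) * (if j = idx (e,s,v) then (1:ℤ) else 0) * x j := by
      rw [Finset.sum_comm]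
      exact Finset.sum_congr rfl fun s _ => Finset.sum_comm
    have step2 : ∀ s : Fin 2, ∑ v : Fin 2, ∑ j,
        ((-1:ℤ))^(s:ℕ) * (if j = idx (e,s,v) then (1:ℤ) else 0) * x j
        = ∑ v : Fin 2, ((-1:ℤ))^(s:ℕ) * x (idx (e,s,v)) := by
      intro s
      refine Finset.sum_congr rfl fun v _ => ?_
      rw [Finset.sum_eq_single (idx (e,s,v))]
      · simp
      · intro b _ hb; simp [hb]
      · intro h; exact absurd (Finset.mem_univ _) h
    have step4 : ∑ s : Fin 2, ∑ v : Fin 2, ∑ j,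
        ((-1:ℤ))^(s:ℕ) * (if j = idx (e,s,v) then (1:ℤ) else 0) * x j
        = ∑ s : Fin 2, ∑ v : Fin 2, ((-1:ℤ))^(s:ℕ) * x (idx (e,s,v)) :=
      Finset.sum_congr rfl fun s _ => step2 s
    rw [step1, step3, step4]
    simp [Fin.sum_univ_two]
    ring
  -- compatibility: for τ inducing the partition, f τ ∘ idx = τ
  have hcompat : ∀ (τ : Idx p → ℕ), Induces τ (Set.range P) → ∀ β, f τ (idx β) = τ β := by
    intro τ hind β
    exact ((hind (rep (idx β)) β).2
      ⟨P (idx β), Set.mem_range_self _, hrep _, hidxmem β⟩)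
  -- forward direction
  have hfwd : ∀ (L : ℕ) (τ : Idx p → ℕ), τ ∈ AsPart p L (Set.range P) →
      (∀ j, f τ j < L) ∧ Function.Injective (f τ) ∧
        ∀ e : Fin p, ∑ j, M e j * ((f τ j : ℕ) : ℤ) = 0 := by
    intro L τ hτ
    obtain ⟨⟨hlt, heq⟩, hind⟩ := hτ
    refine ⟨fun j => hlt _, ?_, ?_⟩
    · intro j j' hjj'
      have : MemSameClass (Set.range P) (rep j) (rep j') := (hind _ _).1 hjj'
      obtain ⟨Q, ⟨i, rfl⟩, h1, h2⟩ := this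
      rw [hmem_uniq _ _ _ (hrep j) h1, hmem_uniq _ _ _ (hrep j') h2]
    · intro e
      rw [hsum (f τ) e, hcompat τ hind, hcompat τ hind, hcompat τ hind, hcompat τ hind]
      have := heq e
      omega
  -- backward direction
  have hbwd : ∀ (L : ℕ) (x : Fin t → ℕ), (∀ j, x j < L) → Function.Injective x →
      (∀ e : Fin p, ∑ j, M e j * (x j : ℤ) = 0) →
      (fun β => x (idx β)) ∈ AsPart p L (Set.range P) ∧ f (fun β => x (idx β)) = x := by
    intro L x hlt hxinj hx
    refine ⟨⟨⟨fun γ => hlt _, fun e => ?_⟩, ?_⟩, ?_⟩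
    · have hz := hx e
      rw [hsum x e] at hz
      show x (idx (e,0,0)) + x (idx (e,0,1)) = x (idx (e,1,0)) + x (idx (e,1,1))
      omega
    · intro β γ
      constructor
      · intro h
        have h' : idx β = idx γ := hxinj h
        exact ⟨P (idx β), Set.mem_range_self _, hidxmem β, h' ▸ hidxmem γ⟩
      · rintro ⟨Q, ⟨i, rfl⟩, h1, h2⟩
        simp only
        rw [hmem_uniq _ _ _ (hidxmem β) h1, hmem_uniq _ _ _ (hidxmem γ) h2]
    · funext j
      show x (idx (rep j)) = x j
      rw [hidxrep]
  constructor
  · -- cardinality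
    have himg : f '' (AsPart p ℓ (Set.range P)) =
        {x : Fin t → ℕ | (∀ j, x j < ℓ) ∧ Function.Injective x ∧
          ∀ e : Fin p, ∑ j, M e j * (x j : ℤ) = 0} := by
      ext x
      constructor
      · rintro ⟨τ, hτ, rfl⟩
        exact hfwd ℓ τ hτ
      · rintro ⟨h1, h2, h3⟩
        obtain ⟨hmem, hfx⟩ := hbwd ℓ x h1 h2 h3
        exact ⟨_, hmem, hfx⟩
    rw [← himg]
    refine (Set.ncard_image_of_injOn ?_).symm
    intro τ hτ τ' hτ' hff
    funext β
    rw [← hcompat τ hτ.2 β, ← hcompat τ' hτ'.2 β, hff]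
  · constructor
    · rintro ⟨L, τ, hτ⟩
      obtain ⟨-, h2, h3⟩ := hfwd L τ hτ
      exact ⟨f τ, h2, h3⟩
    · rintro ⟨x, hxinj, hx⟩
      refine ⟨(Finset.univ.sup x) + 1, (fun β => x (idx β)), ?_⟩
      exact (hbwd _ x (fun j => Nat.lt_succ_of_le (Finset.le_sup (Finset.mem_univ j)))
        hxinj hx).1
end

section
/- Let ℓ be a natural number and k a positive integer, and write ℓ = qk + r with q, r integers and 0 ≤ r < k. Then exactly (ℓ − r)(ℓ + r − k)/(2k) subsets of [ℓ] = {0, 1, ..., ℓ−1} are (k+1)-term arithmetic progressions. -/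
open scoped BigOperators

lemma rev_image (a b : ℤ) (k : ℕ) :
    Finset.image (fun i : ℕ => a + b * i) (Finset.range (k + 1)) =
    Finset.image (fun i : ℕ => (a + b * k) + (-b) * i) (Finset.range (k + 1)) := by
  ext x
  simp only [Finset.mem_image, Finset.mem_range]
  constructor
  · rintro ⟨i, hi, rfl⟩
    refine ⟨k - i, by omega, ?_⟩
    have h : ((k - i : ℕ) : ℤ) = (k : ℤ) - i := by
      push_cast [Nat.cast_sub (by omega : i ≤ k)]; ring
    rw [h]; ring
  · rintro ⟨i, hi, rfl⟩
    refine ⟨k - i, by omega, ?_⟩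
    have h : ((k - i : ℕ) : ℤ) = (k : ℤ) - i := by
      push_cast [Nat.cast_sub (by omega : i ≤ k)]; ring
    rw [h]; ring

/-- The number of subsets of `[ℓ] = {0,…,ℓ−1}` that are `(k+1)`-term arithmetic
progressions is `(ℓ − r)(ℓ + r − k)/(2k)`, where `ℓ = qk + r` with `0 ≤ r < k`. -/
theorem count_arithmetic_progressions (ℓ k : ℕ) (hk : 0 < k) (q r : ℤ)
    (hℓ : (ℓ : ℤ) = q * k + r) (hr0 : 0 ≤ r) (hrk : r < k) :
    (Set.ncard {S : Finset ℤ | S ⊆ Finset.Ico (0 : ℤ) ℓ ∧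
        ∃ a b : ℤ, b ≠ 0 ∧
          S = Finset.image (fun i : ℕ => a + b * i) (Finset.range (k + 1))} : ℚ) =
      ((ℓ : ℚ) - r) * ((ℓ : ℚ) + r - k) / (2 * k) := by
  have hkz : (0 : ℤ) < k := by exact_mod_cast hk
  have hlz : (0 : ℤ) ≤ (ℓ : ℤ) := by positivity
  have hq0 : 0 ≤ q := by nlinarith
  set n := q.toNat with hn
  have hqn : (n : ℤ) = q := Int.toNat_of_nonneg hq0
  set f : ℤ × ℤ → Finset ℤ :=
    fun p => Finset.image (fun i : ℕ => p.1 + p.2 * i) (Finset.range (k + 1)) with hf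
  set T : Finset (ℤ × ℤ) := (Finset.range n).biUnion
      (fun j => (Finset.Ico (0 : ℤ) ((ℓ : ℤ) - ((j : ℤ) + 1) * k)).image
        (fun a => (a, ((j : ℤ) + 1)))) with hT
  have hmem : ∀ a b : ℤ, (a, b) ∈ T ↔ 1 ≤ b ∧ 0 ≤ a ∧ a + b * k < ℓ := by
    intro a b
    simp only [hT, Finset.mem_biUnion, Finset.mem_image, Finset.mem_range, Finset.mem_Ico,
      Prod.mk.injEq]
    constructor
    · rintro ⟨j, hj, a', ⟨ha0, ha1⟩, rfl, rfl⟩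
      refine ⟨by omega, ha0, by linarith⟩
    · rintro ⟨hb1, ha0, hab⟩
      refine ⟨(b - 1).toNat, ?_, a, ⟨ha0, ?_⟩, rfl, ?_⟩
      · have : b ≤ q := by nlinarith
        omega
      · have : ((b - 1).toNat : ℤ) = b - 1 := Int.toNat_of_nonneg (by omega)
        rw [this]; linarith
      · have : ((b - 1).toNat : ℤ) = b - 1 := Int.toNat_of_nonneg (by omega)
        rw [this]; ring
  -- the set equals the image of T under f
  have hseteq : {S : Finset ℤ | S ⊆ Finset.Ico (0 : ℤ) ℓ ∧
      ∃ a b : ℤ, b ≠ 0 ∧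
        S = Finset.image (fun i : ℕ => a + b * i) (Finset.range (k + 1))} =
      ↑(T.image f) := by
    ext S
    simp only [Set.mem_setOf_eq, Finset.coe_image, Set.mem_image, Finset.mem_coe]
    constructor
    · rintro ⟨hsub, a, b, hb, rfl⟩
      -- normalize to positive b
      obtain ⟨a', b', hb1, hS⟩ : ∃ a' b' : ℤ, 1 ≤ b' ∧
          Finset.image (fun i : ℕ => a + b * i) (Finset.range (k + 1)) =
          Finset.image (fun i : ℕ => a' + b' * i) (Finset.range (k + 1)) := by
        rcases lt_or_gt_of_ne hb with hneg | hpos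
        · exact ⟨a + b * k, -b, by omega, rev_image a b k⟩
        · exact ⟨a, b, by omega, rfl⟩
      rw [hS] at hsub ⊢
      have hmem0 : a' ∈ Finset.image (fun i : ℕ => a' + b' * i) (Finset.range (k + 1)) := by
        refine Finset.mem_image.2 ⟨0, by simp, by simp⟩
      have hmemk : a' + b' * k ∈
          Finset.image (fun i : ℕ => a' + b' * i) (Finset.range (k + 1)) := by
        refine Finset.mem_image.2 ⟨k, by simp, by simp⟩
      have h0 := Finset.mem_Ico.1 (hsub hmem0)
      have hkk := Finset.mem_Ico.1 (hsub hmemk)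
      exact ⟨(a', b'), (hmem a' b').2 ⟨hb1, h0.1, hkk.2⟩, rfl⟩
    · rintro ⟨⟨a, b⟩, hp, rfl⟩
      obtain ⟨hb1, ha0, hab⟩ := (hmem a b).1 hp
      refine ⟨?_, a, b, by omega, rfl⟩
      intro x hx
      obtain ⟨i, hi, rfl⟩ := Finset.mem_image.1 hx
      have hi' : (i : ℤ) ≤ k := by
        have := Finset.mem_range.1 hi; exact_mod_cast Nat.lt_succ_iff.1 this
      have hbi : 0 ≤ b * i := by positivity
      simp only [hf]
      refine Finset.mem_Ico.2 ⟨by linarith, ?_⟩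
      nlinarith [Int.natCast_nonneg i]
  -- injectivity of f on T
  have hinj : Set.InjOn f ↑T := by
    rintro ⟨a, b⟩ hp ⟨a', b'⟩ hp' hEq
    simp only [Finset.mem_coe] at hp hp'
    obtain ⟨hb1, ha0, hab⟩ := (hmem a b).1 hp
    obtain ⟨hb1', ha0', hab'⟩ := (hmem a' b').1 hp'
    have key : ∀ c d c' d' : ℤ, 1 ≤ d → 1 ≤ d' →
        Finset.image (fun i : ℕ => c + d * i) (Finset.range (k + 1)) =
        Finset.image (fun i : ℕ => c' + d' * i) (Finset.range (k + 1)) →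
        c' ≤ c ∧ d * k ≤ d' * k + (c' - c) := by
      intro c d c' d' hd hd' h
      have hc : c ∈ Finset.image (fun i : ℕ => c' + d' * i) (Finset.range (k + 1)) := by
        rw [← h]; exact Finset.mem_image.2 ⟨0, by simp, by simp⟩
      obtain ⟨i, hi, hci⟩ := Finset.mem_image.1 hc
      have hi0 : (0 : ℤ) ≤ i := Int.natCast_nonneg i
      have hdi : 0 ≤ d' * i := by positivity
      constructor
      · linarith
      · have hck : c + d * k ∈
            Finset.image (fun i : ℕ => c' + d' * i) (Finset.range (k + 1)) := by
          rw [← h]; exact Finset.mem_image.2 ⟨k, by simp, by simp⟩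
        obtain ⟨j, hj, hcj⟩ := Finset.mem_image.1 hck
        have hj' : (j : ℤ) ≤ k := by
          have := Finset.mem_range.1 hj; exact_mod_cast Nat.lt_succ_iff.1 this
        have : d' * j ≤ d' * k := by
          apply mul_le_mul_of_nonneg_left hj' (by omega)
        linarith
    have h1 := key a b a' b' hb1 hb1' hEq
    have h2 := key a' b' a b hb1' hb1 hEq.symm
    have hac : a = a' := le_antisymm h2.1 h1.1
    have hbc : b = b' := by
      have : b * k = b' * k := by omega
      have hkne : (k : ℤ) ≠ 0 := by omega
      exact mul_right_cancel₀ hkne this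
    simp [hac, hbc]
  -- cardinality of T
  have hTcard : (T.card : ℤ) = ∑ j ∈ Finset.range n, ((ℓ : ℤ) - ((j : ℤ) + 1) * k) := by
    have hd : ∀ x ∈ Finset.range n, ∀ y ∈ Finset.range n, x ≠ y →
        Disjoint ((Finset.Ico (0 : ℤ) ((ℓ : ℤ) - ((x : ℤ) + 1) * k)).image
          (fun a => (a, ((x : ℤ) + 1))))
        ((Finset.Ico (0 : ℤ) ((ℓ : ℤ) - ((y : ℤ) + 1) * k)).image
          (fun a => (a, ((y : ℤ) + 1)))) := by
      intro x _ y _ hxy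
      simp only [Finset.disjoint_left, Finset.mem_image]
      rintro ⟨a, b⟩ ⟨a1, _, h1⟩ ⟨a2, _, h2⟩
      rw [← h2] at h1
      have : (x : ℤ) = y := by
        have := (Prod.ext_iff.1 h1).2
        omega
      exact hxy (by exact_mod_cast this)
    rw [hT, Finset.card_biUnion hd]
    push_cast
    apply Finset.sum_congr rfl
    intro j hj
    have hjn : (j : ℤ) < n := by exact_mod_cast Finset.mem_range.1 hj
    rw [Finset.card_image_of_injective _ (fun a a' h => (Prod.ext_iff.1 h).1)]
    rw [Int.card_Ico]
    have hnn : 0 ≤ (ℓ : ℤ) - ((j : ℤ) + 1) * k - 0 := by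
      have : ((j : ℤ) + 1) * k ≤ q * k := by
        apply mul_le_mul_of_nonneg_right (by omega) (by omega)
      linarith
    rw [Int.toNat_of_nonneg hnn]
    ring
  -- sum evaluation
  have hsum : (2 : ℤ) * k * (T.card : ℤ) = ((ℓ : ℤ) - r) * ((ℓ : ℤ) + r - k) := by
    have hgauss : (∑ j ∈ Finset.range n, (j : ℤ)) * 2 = (n : ℤ) * ((n : ℤ) - 1) := by
      have hc : ((∑ j ∈ Finset.range n, j : ℕ) : ℤ) = ∑ j ∈ Finset.range n, (j : ℤ) := by
        push_cast; rfl
      have hg := congrArg (fun m : ℕ => (m : ℤ)) (Finset.sum_range_id_mul_two n)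
      rcases Nat.eq_zero_or_pos n with h | h
      · simp [h]
      · have h1 : ((n - 1 : ℕ) : ℤ) = (n : ℤ) - 1 := by omega
        push_cast [h1] at hg
        linear_combination hg
    rw [hTcard]
    rw [Finset.sum_sub_distrib, Finset.sum_const, Finset.card_range]
    have hsplit : ∑ j ∈ Finset.range n, ((j : ℤ) + 1) * k =
        ((∑ j ∈ Finset.range n, (j : ℤ)) + n) * k := by
      rw [← Finset.sum_mul, Finset.sum_add_distrib, Finset.sum_const, Finset.card_range,
        nsmul_eq_mul, mul_one]
    rw [hsplit]
    have hℓn : (ℓ : ℤ) = (n : ℤ) * k + r := by rw [hqn]; exact hℓ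
    simp only [nsmul_eq_mul]
    linear_combination (-(k : ℤ) ^ 2) * hgauss + (-(ℓ : ℤ) + (k : ℤ) * n + k - r) * hℓn
  -- finish
  rw [hseteq, Set.ncard_coe_finset, Finset.card_image_of_injOn hinj]
  have hkq : (0 : ℚ) < (k : ℚ) := by exact_mod_cast hk
  rw [eq_div_iff (by positivity : (2 : ℚ) * (k : ℚ) ≠ 0)]
  have h2 := congrArg (fun z : ℤ => (z : ℚ)) hsum
  push_cast at h2 ⊢
  linarith
end

section
/- Let ℓ be a natural number. The number of 5-tuples (A,B,C,D,E) of pairwise distinct elements of [ℓ] satisfying B − A = C − B = E − D, A < B < C, and D < E equals: (5ℓ³ − 32ℓ² + 52ℓ)/24 if ℓ ≡ 0 (mod 6); (5ℓ³ − 32ℓ² + 55ℓ − 28)/24 if ℓ ≡ ±1 (mod 6); (5ℓ³ − 32ℓ² + 52ℓ − 16)/24 if ℓ ≡ ±2 (mod 6); and (5ℓ³ − 32ℓ² + 55ℓ − 12)/24 if ℓ ≡ 3 (mod 6). -/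
lemma sumProd (x : ℚ) : ∀ n : ℕ, ∑ d ∈ Finset.range n, ((x - 2*d) * (x - d - 2)) =
    n * (x^2 - 2*x) - (3*x - 4) * (n*(n-1)) / 2 + (n*(n-1)*(2*n-1)) / 3
  | 0 => by norm_num
  | (n+1) => by
    rw [Finset.sum_range_succ, sumProd x n]
    push_cast
    ring

lemma sumLin (x : ℚ) : ∀ n : ℕ, ∑ d ∈ Finset.range n, (x - 3*d) =
    n * x - 3 * (n*(n-1)) / 2
  | 0 => by norm_num
  | (n+1) => by
    rw [Finset.sum_range_succ, sumLin x n]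
    push_cast
    ring


lemma card_bij_step (ℓ : ℕ) :
    ((Finset.range ℓ ×ˢ Finset.range ℓ ×ˢ Finset.range ℓ ×ˢ
        Finset.range ℓ ×ˢ Finset.range ℓ).filter
      (fun x =>
        let A := x.1; let B := x.2.1; let C := x.2.2.1
        let D := x.2.2.2.1; let E := x.2.2.2.2
        A ≠ B ∧ A ≠ C ∧ A ≠ D ∧ A ≠ E ∧ B ≠ C ∧ B ≠ D ∧ B ≠ E ∧
        C ≠ D ∧ C ≠ E ∧ D ≠ E ∧
        (B : ℤ) - A = (C : ℤ) - B ∧ (C : ℤ) - B = (E : ℤ) - D ∧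
        A < B ∧ B < C ∧ D < E)).card =
    ((Finset.range ℓ ×ˢ Finset.range ℓ ×ˢ Finset.range ℓ).filter
      (fun y => 1 ≤ y.1 ∧ y.2.1 + 2 * y.1 < ℓ ∧ y.2.2 + y.1 < ℓ ∧
        y.2.2 ≠ y.2.1 ∧ y.2.2 ≠ y.2.1 + y.1 ∧ y.2.2 ≠ y.2.1 + 2 * y.1 ∧
        y.2.2 + y.1 ≠ y.2.1)).card := by
  apply Finset.card_nbij' (fun x => (x.2.1 - x.1, x.1, x.2.2.2.1))
    (fun y => (y.2.1, y.2.1 + y.1, (y.2.1 + 2 * y.1, (y.2.2, y.2.2 + y.1))))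
  · intro x hx
    simp only [Finset.mem_coe, Finset.mem_filter, Finset.mem_product, Finset.mem_range] at hx ⊢
    omega
  · intro y hy
    simp only [Finset.mem_coe, Finset.mem_filter, Finset.mem_product, Finset.mem_range] at hy ⊢
    push_cast
    omega
  · intro x hx
    simp only [Finset.mem_coe, Finset.mem_filter, Finset.mem_product, Finset.mem_range] at hx
    obtain ⟨x1, x2, x3, x4, x5⟩ := x
    simp only [Prod.mk.injEq] at hx ⊢
    exact ⟨trivial, by omega, by omega, trivial, by omega⟩
  · intro y hy
    simp only [Finset.mem_coe, Finset.mem_filter, Finset.mem_product, Finset.mem_range] at hy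
    obtain ⟨y1, y2, y3⟩ := y
    simp only [Prod.mk.injEq] at hy ⊢
    exact ⟨by omega, trivial⟩


lemma cD_val (ℓ d A : ℕ) (hd : 1 ≤ d) (hA : A + 2*d < ℓ) :
    (((Finset.range ℓ).filter
      (fun D => D + d < ℓ ∧ D ≠ A ∧ D ≠ A + d ∧ D ≠ A + 2*d ∧ D + d ≠ A)).card : ℚ)
    = (ℓ:ℚ) - d - 2 - (if d ≤ A then 1 else 0) - (if A + 3*d < ℓ then 1 else 0) := by
  by_cases h1 : d ≤ A <;> by_cases h2 : A + 3*d < ℓ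
  · have hset : (Finset.range ℓ).filter
        (fun D => D + d < ℓ ∧ D ≠ A ∧ D ≠ A + d ∧ D ≠ A + 2*d ∧ D + d ≠ A)
        = Finset.range (ℓ - d) \ ({A - d, A, A + d, A + 2*d} : Finset ℕ) := by
      ext D
      simp only [Finset.mem_filter, Finset.mem_range, Finset.mem_sdiff, Finset.mem_insert,
        Finset.mem_singleton]
      omega
    have hsub : ({A - d, A, A + d, A + 2*d} : Finset ℕ) ⊆ Finset.range (ℓ - d) := by
      intro x hx
      simp only [Finset.mem_insert, Finset.mem_singleton] at hx
      simp only [Finset.mem_range]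
      omega
    have hc : ({A - d, A, A + d, A + 2*d} : Finset ℕ).card = 4 := by
      rw [Finset.card_insert_of_notMem (by simp; omega),
        Finset.card_insert_of_notMem (by simp; omega),
        Finset.card_insert_of_notMem (by simp; omega), Finset.card_singleton]
    rw [hset, Finset.card_sdiff_of_subset hsub, hc, Finset.card_range, if_pos h1, if_pos h2,
      Nat.cast_sub (by omega)]
    rw [Nat.cast_sub (by omega)]
    ring
  · have hset : (Finset.range ℓ).filter
        (fun D => D + d < ℓ ∧ D ≠ A ∧ D ≠ A + d ∧ D ≠ A + 2*d ∧ D + d ≠ A)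
        = Finset.range (ℓ - d) \ ({A - d, A, A + d} : Finset ℕ) := by
      ext D
      simp only [Finset.mem_filter, Finset.mem_range, Finset.mem_sdiff, Finset.mem_insert,
        Finset.mem_singleton]
      omega
    have hsub : ({A - d, A, A + d} : Finset ℕ) ⊆ Finset.range (ℓ - d) := by
      intro x hx
      simp only [Finset.mem_insert, Finset.mem_singleton] at hx
      simp only [Finset.mem_range]
      omega
    have hc : ({A - d, A, A + d} : Finset ℕ).card = 3 := by
      rw [Finset.card_insert_of_notMem (by simp; omega),
        Finset.card_insert_of_notMem (by simp; omega), Finset.card_singleton]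
    rw [hset, Finset.card_sdiff_of_subset hsub, hc, Finset.card_range, if_pos h1, if_neg h2,
      Nat.cast_sub (by omega)]
    rw [Nat.cast_sub (by omega)]
    ring
  · have hset : (Finset.range ℓ).filter
        (fun D => D + d < ℓ ∧ D ≠ A ∧ D ≠ A + d ∧ D ≠ A + 2*d ∧ D + d ≠ A)
        = Finset.range (ℓ - d) \ ({A, A + d, A + 2*d} : Finset ℕ) := by
      ext D
      simp only [Finset.mem_filter, Finset.mem_range, Finset.mem_sdiff, Finset.mem_insert,
        Finset.mem_singleton]
      omega
    have hsub : ({A, A + d, A + 2*d} : Finset ℕ) ⊆ Finset.range (ℓ - d) := by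
      intro x hx
      simp only [Finset.mem_insert, Finset.mem_singleton] at hx
      simp only [Finset.mem_range]
      omega
    have hc : ({A, A + d, A + 2*d} : Finset ℕ).card = 3 := by
      rw [Finset.card_insert_of_notMem (by simp; omega),
        Finset.card_insert_of_notMem (by simp; omega), Finset.card_singleton]
    rw [hset, Finset.card_sdiff_of_subset hsub, hc, Finset.card_range, if_neg h1, if_pos h2,
      Nat.cast_sub (by omega)]
    rw [Nat.cast_sub (by omega)]
    ring
  · have hset : (Finset.range ℓ).filter
        (fun D => D + d < ℓ ∧ D ≠ A ∧ D ≠ A + d ∧ D ≠ A + 2*d ∧ D + d ≠ A)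
        = Finset.range (ℓ - d) \ ({A, A + d} : Finset ℕ) := by
      ext D
      simp only [Finset.mem_filter, Finset.mem_range, Finset.mem_sdiff, Finset.mem_insert,
        Finset.mem_singleton]
      omega
    have hsub : ({A, A + d} : Finset ℕ) ⊆ Finset.range (ℓ - d) := by
      intro x hx
      simp only [Finset.mem_insert, Finset.mem_singleton] at hx
      simp only [Finset.mem_range]
      omega
    have hc : ({A, A + d} : Finset ℕ).card = 2 := by
      rw [Finset.card_insert_of_notMem (by simp; omega), Finset.card_singleton]
    rw [hset, Finset.card_sdiff_of_subset hsub, hc, Finset.card_range, if_neg h1, if_neg h2,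
      Nat.cast_sub (by omega)]
    rw [Nat.cast_sub (by omega)]
    ring

-- step: triple card to double sum
lemma step2 (ℓ : ℕ) :
    (((Finset.range ℓ ×ˢ Finset.range ℓ ×ˢ Finset.range ℓ).filter
      (fun y => 1 ≤ y.1 ∧ y.2.1 + 2 * y.1 < ℓ ∧ y.2.2 + y.1 < ℓ ∧
        y.2.2 ≠ y.2.1 ∧ y.2.2 ≠ y.2.1 + y.1 ∧ y.2.2 ≠ y.2.1 + 2 * y.1 ∧
        y.2.2 + y.1 ≠ y.2.1)).card : ℚ)
    = ∑ d ∈ Finset.range ℓ, ∑ A ∈ Finset.range ℓ,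
        (if 1 ≤ d ∧ A + 2*d < ℓ then
          ((ℓ:ℚ) - d - 2 - (if d ≤ A then 1 else 0) - (if A + 3*d < ℓ then 1 else 0))
        else 0) := by
  rw [Finset.card_filter]
  push_cast
  rw [Finset.sum_product]
  refine Finset.sum_congr rfl fun d hd => ?_
  rw [Finset.sum_product]
  refine Finset.sum_congr rfl fun A hA => ?_
  by_cases h : 1 ≤ d ∧ A + 2*d < ℓ
  · rw [if_pos h, ← cD_val ℓ d A h.1 h.2, Finset.card_filter]
    push_cast
    refine Finset.sum_congr rfl fun D hD => ?_
    simp only [h.1, h.2]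
    simp
  · rw [if_neg h]
    apply Finset.sum_eq_zero
    intro D hD
    rw [if_neg]
    dsimp only
    tauto


-- inner A-sum evaluation, fixed d with 1 ≤ d
lemma innerA (ℓ d : ℕ) (hd : 1 ≤ d) :
    ∑ A ∈ Finset.range ℓ,
        (if A + 2*d < ℓ then
          ((ℓ:ℚ) - d - 2 - (if d ≤ A then 1 else 0) - (if A + 3*d < ℓ then 1 else 0))
        else 0)
    = ((ℓ - 2*d : ℕ) : ℚ) * ((ℓ:ℚ) - d - 2) - 2 * ((ℓ - 3*d : ℕ) : ℚ) := by
  have h1 : ∑ A ∈ Finset.range ℓ,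
        (if A + 2*d < ℓ then
          ((ℓ:ℚ) - d - 2 - (if d ≤ A then 1 else 0) - (if A + 3*d < ℓ then 1 else 0))
        else 0)
      = ∑ A ∈ Finset.range (ℓ - 2*d),
          ((ℓ:ℚ) - d - 2 - (if d ≤ A then 1 else 0) - (if A + 3*d < ℓ then 1 else 0)) := by
    rw [← Finset.sum_subset (Finset.range_subset_range.2 (by omega : ℓ - 2*d ≤ ℓ))
      (fun x hx hnx => by
        rw [if_neg]
        simp only [Finset.mem_range] at hx hnx
        omega)]
    refine Finset.sum_congr rfl fun A hA => ?_
    rw [if_pos]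
    simp only [Finset.mem_range] at hA
    omega
  rw [h1]
  rw [Finset.sum_sub_distrib, Finset.sum_sub_distrib, Finset.sum_const, nsmul_eq_mul]
  rw [Finset.sum_boole, Finset.sum_boole]
  have h2 : (Finset.range (ℓ - 2*d)).filter (fun A => d ≤ A) = Finset.Ico d (ℓ - 2*d) := by
    ext A
    simp only [Finset.mem_filter, Finset.mem_range, Finset.mem_Ico]
    omega
  have h3 : (Finset.range (ℓ - 2*d)).filter (fun A => A + 3*d < ℓ) =
      Finset.range (ℓ - 3*d) := by
    ext A
    simp only [Finset.mem_filter, Finset.mem_range]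
    omega
  rw [h2, h3, Nat.card_Ico, Finset.card_range, Finset.card_range]
  have h4 : ℓ - 2*d - d = ℓ - 3*d := by omega
  rw [h4]
  ring


lemma sum_ite_trunc (ℓ b : ℕ) (f : ℕ → ℚ) (hb1 : 1 ≤ b) (hbl : b ≤ ℓ)
    (hzero : ∀ d, b ≤ d → d < ℓ → f d = 0) :
    ∑ d ∈ Finset.range ℓ, (if 1 ≤ d then f d else 0)
    = ∑ d ∈ Finset.range b, f d - f 0 := by
  have e1 : ∑ d ∈ Finset.range ℓ, (if 1 ≤ d then f d else 0)
      = ∑ d ∈ Finset.range b, (if 1 ≤ d then f d else 0) := by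
    rw [← Finset.sum_subset (Finset.range_subset_range.2 hbl) (fun x hx hnx => ?_)]
    simp only [Finset.mem_range] at hx hnx
    rw [hzero x (by omega) hx]
    simp
  rw [e1, Finset.range_eq_Ico, Finset.sum_eq_sum_Ico_succ_bot (by omega : 0 < b),
    Finset.sum_eq_sum_Ico_succ_bot (by omega : 0 < b) f]
  simp only [Nat.lt_irrefl, if_neg (by omega : ¬ (1:ℕ) ≤ 0), zero_add]
  rw [Finset.sum_congr rfl (fun d hd => ?_)]
  · ring
  · rw [if_pos]
    simp only [Finset.mem_Ico] at hd
    omega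

lemma key (ℓ : ℕ) (hl : 1 ≤ ℓ) :
    (((Finset.range ℓ ×ˢ Finset.range ℓ ×ˢ Finset.range ℓ).filter
      (fun y => 1 ≤ y.1 ∧ y.2.1 + 2 * y.1 < ℓ ∧ y.2.2 + y.1 < ℓ ∧
        y.2.2 ≠ y.2.1 ∧ y.2.2 ≠ y.2.1 + y.1 ∧ y.2.2 ≠ y.2.1 + 2 * y.1 ∧
        y.2.2 + y.1 ≠ y.2.1)).card : ℚ)
    = ((((ℓ+1)/2 : ℕ) : ℚ) * ((ℓ:ℚ)^2 - 2*(ℓ:ℚ))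
        - (3*(ℓ:ℚ) - 4) * ((((ℓ+1)/2 : ℕ):ℚ) * ((((ℓ+1)/2 : ℕ):ℚ) - 1)) / 2
        + ((((ℓ+1)/2 : ℕ):ℚ) * ((((ℓ+1)/2 : ℕ):ℚ) - 1) * (2*(((ℓ+1)/2 : ℕ):ℚ) - 1)) / 3
        - (ℓ:ℚ) * ((ℓ:ℚ) - 2))
      - 2 * ((((ℓ+2)/3 : ℕ):ℚ) * (ℓ:ℚ)
        - 3 * ((((ℓ+2)/3 : ℕ):ℚ) * ((((ℓ+2)/3 : ℕ):ℚ) - 1)) / 2 - (ℓ:ℚ)) := by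
  rw [step2]
  have t1 : ∑ d ∈ Finset.range ℓ, ∑ A ∈ Finset.range ℓ,
        (if 1 ≤ d ∧ A + 2*d < ℓ then
          ((ℓ:ℚ) - d - 2 - (if d ≤ A then 1 else 0) - (if A + 3*d < ℓ then 1 else 0))
        else 0)
      = ∑ d ∈ Finset.range ℓ, (if 1 ≤ d then
          (((ℓ - 2*d : ℕ) : ℚ) * ((ℓ:ℚ) - d - 2) - 2 * ((ℓ - 3*d : ℕ) : ℚ)) else 0) := by
    refine Finset.sum_congr rfl fun d _ => ?_
    by_cases h : 1 ≤ d
    · rw [if_pos h, ← innerA ℓ d h]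
      refine Finset.sum_congr rfl fun A _ => ?_
      by_cases h2 : A + 2*d < ℓ
      · rw [if_pos h2, if_pos ⟨h, h2⟩]
      · rw [if_neg h2, if_neg (by tauto)]
    · rw [if_neg h]
      exact Finset.sum_eq_zero fun A _ => if_neg (by tauto)
  rw [t1]
  have t2 : ∑ d ∈ Finset.range ℓ, (if 1 ≤ d then
        (((ℓ - 2*d : ℕ) : ℚ) * ((ℓ:ℚ) - d - 2) - 2 * ((ℓ - 3*d : ℕ) : ℚ)) else 0)
      = ∑ d ∈ Finset.range ℓ, (if 1 ≤ d then (((ℓ - 2*d : ℕ) : ℚ) * ((ℓ:ℚ) - d - 2)) else 0)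
        - 2 * ∑ d ∈ Finset.range ℓ, (if 1 ≤ d then ((ℓ - 3*d : ℕ) : ℚ) else 0) := by
    rw [Finset.mul_sum, ← Finset.sum_sub_distrib]
    refine Finset.sum_congr rfl fun d _ => ?_
    split_ifs <;> ring
  rw [t2]
  rw [sum_ite_trunc ℓ ((ℓ+1)/2) _ (by omega) (by omega)
      (fun d hd hdl => by
        have h0 : ℓ - 2*d = 0 := by omega
        rw [h0]; norm_num),
    sum_ite_trunc ℓ ((ℓ+2)/3) _ (by omega) (by omega)
      (fun d hd hdl => by
        have h0 : ℓ - 3*d = 0 := by omega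
        rw [h0]; norm_num)]
  have e2 : ∑ d ∈ Finset.range ((ℓ+1)/2), (((ℓ - 2*d : ℕ) : ℚ) * ((ℓ:ℚ) - d - 2))
      = ∑ d ∈ Finset.range ((ℓ+1)/2), (((ℓ:ℚ) - 2*d) * ((ℓ:ℚ) - d - 2)) := by
    refine Finset.sum_congr rfl fun d hd => ?_
    simp only [Finset.mem_range] at hd
    rw [Nat.cast_sub (by omega)]
    push_cast
    ring
  have e3 : ∑ d ∈ Finset.range ((ℓ+2)/3), ((ℓ - 3*d : ℕ) : ℚ)
      = ∑ d ∈ Finset.range ((ℓ+2)/3), ((ℓ:ℚ) - 3*d) := by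
    refine Finset.sum_congr rfl fun d hd => ?_
    simp only [Finset.mem_range] at hd
    rw [Nat.cast_sub (by omega)]
    push_cast
    ring
  rw [e2, e3, sumProd, sumLin]
  norm_num


open scoped BigOperators

/-- The count of 5-tuples `(A,B,C,D,E)` of pairwise distinct elements of `[ℓ]`
with `B − A = C − B = E − D` (differences in `ℤ`), `A < B < C`, and `D < E`. -/
theorem count_progression_pairs (ℓ : ℕ) :
    let N := ((Finset.range ℓ ×ˢ Finset.range ℓ ×ˢ Finset.range ℓ ×ˢ
        Finset.range ℓ ×ˢ Finset.range ℓ).filter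
      (fun x =>
        let A := x.1; let B := x.2.1; let C := x.2.2.1
        let D := x.2.2.2.1; let E := x.2.2.2.2
        A ≠ B ∧ A ≠ C ∧ A ≠ D ∧ A ≠ E ∧ B ≠ C ∧ B ≠ D ∧ B ≠ E ∧
        C ≠ D ∧ C ≠ E ∧ D ≠ E ∧
        (B : ℤ) - A = (C : ℤ) - B ∧ (C : ℤ) - B = (E : ℤ) - D ∧
        A < B ∧ B < C ∧ D < E)).card
    (ℓ % 6 = 0 → (N : ℚ) = (5 * (ℓ : ℚ) ^ 3 - 32 * (ℓ : ℚ) ^ 2 + 52 * ℓ) / 24) ∧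
    (ℓ % 6 = 1 ∨ ℓ % 6 = 5 →
      (N : ℚ) = (5 * (ℓ : ℚ) ^ 3 - 32 * (ℓ : ℚ) ^ 2 + 55 * ℓ - 28) / 24) ∧
    (ℓ % 6 = 2 ∨ ℓ % 6 = 4 →
      (N : ℚ) = (5 * (ℓ : ℚ) ^ 3 - 32 * (ℓ : ℚ) ^ 2 + 52 * ℓ - 16) / 24) ∧
    (ℓ % 6 = 3 → (N : ℚ) = (5 * (ℓ : ℚ) ^ 3 - 32 * (ℓ : ℚ) ^ 2 + 55 * ℓ - 12) / 24) := by
  intro N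
  rcases Nat.eq_zero_or_pos ℓ with h0 | hl
  · subst h0
    have hN : N = 0 := by simp [N]
    refine ⟨fun h => ?_, fun h => ?_, fun h => ?_, fun h => ?_⟩
    · rw [hN]; norm_num
    · norm_num at h
    · norm_num at h
    · norm_num at h
  · have hcard : (N : ℚ) = ((((ℓ+1)/2 : ℕ) : ℚ) * ((ℓ:ℚ)^2 - 2*(ℓ:ℚ))
        - (3*(ℓ:ℚ) - 4) * ((((ℓ+1)/2 : ℕ):ℚ) * ((((ℓ+1)/2 : ℕ):ℚ) - 1)) / 2
        + ((((ℓ+1)/2 : ℕ):ℚ) * ((((ℓ+1)/2 : ℕ):ℚ) - 1) * (2*(((ℓ+1)/2 : ℕ):ℚ) - 1)) / 3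
        - (ℓ:ℚ) * ((ℓ:ℚ) - 2))
      - 2 * ((((ℓ+2)/3 : ℕ):ℚ) * (ℓ:ℚ)
        - 3 * ((((ℓ+2)/3 : ℕ):ℚ) * ((((ℓ+2)/3 : ℕ):ℚ) - 1)) / 2 - (ℓ:ℚ)) := by
      have hNdef : N = ((Finset.range ℓ ×ˢ Finset.range ℓ ×ˢ Finset.range ℓ ×ˢ
          Finset.range ℓ ×ˢ Finset.range ℓ).filter
        (fun x =>
          let A := x.1; let B := x.2.1; let C := x.2.2.1
          let D := x.2.2.2.1; let E := x.2.2.2.2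
          A ≠ B ∧ A ≠ C ∧ A ≠ D ∧ A ≠ E ∧ B ≠ C ∧ B ≠ D ∧ B ≠ E ∧
          C ≠ D ∧ C ≠ E ∧ D ≠ E ∧
          (B : ℤ) - A = (C : ℤ) - B ∧ (C : ℤ) - B = (E : ℤ) - D ∧
          A < B ∧ B < C ∧ D < E)).card := rfl
      rw [hNdef, card_bij_step ℓ, key ℓ hl]
    refine ⟨fun h => ?_, fun h => ?_, fun h => ?_, fun h => ?_⟩
    · -- r = 0
      have hk : ℓ = 6*(ℓ/6) + 0 := by omega
      set k := ℓ/6 with hkdef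
      have h2 : (ℓ+1)/2 = 3*k := by omega
      have h3 : (ℓ+2)/3 = 2*k := by omega
      have hQ : (ℓ:ℚ) = 6*(k:ℚ) + 0 := by rw [hk]; push_cast; ring
      rw [hcard, h2, h3, hQ]
      push_cast
      ring
    · rcases h with h | h
      · -- r = 1
        have hk : ℓ = 6*(ℓ/6) + 1 := by omega
        set k := ℓ/6 with hkdef
        have h2 : (ℓ+1)/2 = 3*k+1 := by omega
        have h3 : (ℓ+2)/3 = 2*k+1 := by omega
        have hQ : (ℓ:ℚ) = 6*(k:ℚ) + 1 := by rw [hk]; push_cast; ring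
        rw [hcard, h2, h3, hQ]
        push_cast
        ring
      · -- r = 5
        have hk : ℓ = 6*(ℓ/6) + 5 := by omega
        set k := ℓ/6 with hkdef
        have h2 : (ℓ+1)/2 = 3*k+3 := by omega
        have h3 : (ℓ+2)/3 = 2*k+2 := by omega
        have hQ : (ℓ:ℚ) = 6*(k:ℚ) + 5 := by rw [hk]; push_cast; ring
        rw [hcard, h2, h3, hQ]
        push_cast
        ring
    · rcases h with h | h
      · -- r = 2
        have hk : ℓ = 6*(ℓ/6) + 2 := by omega
        set k := ℓ/6 with hkdef
        have h2 : (ℓ+1)/2 = 3*k+1 := by omega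
        have h3 : (ℓ+2)/3 = 2*k+1 := by omega
        have hQ : (ℓ:ℚ) = 6*(k:ℚ) + 2 := by rw [hk]; push_cast; ring
        rw [hcard, h2, h3, hQ]
        push_cast
        ring
      · -- r = 4
        have hk : ℓ = 6*(ℓ/6) + 4 := by omega
        set k := ℓ/6 with hkdef
        have h2 : (ℓ+1)/2 = 3*k+2 := by omega
        have h3 : (ℓ+2)/3 = 2*k+2 := by omega
        have hQ : (ℓ:ℚ) = 6*(k:ℚ) + 4 := by rw [hk]; push_cast; ring
        rw [hcard, h2, h3, hQ]
        push_cast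
        ring
    · -- r = 3
      have hk : ℓ = 6*(ℓ/6) + 3 := by omega
      set k := ℓ/6 with hkdef
      have h2 : (ℓ+1)/2 = 3*k+2 := by omega
      have h3 : (ℓ+2)/3 = 2*k+1 := by omega
      have hQ : (ℓ:ℚ) = 6*(k:ℚ) + 3 := by rw [hk]; push_cast; ring
      rw [hcard, h2, h3, hQ]
      push_cast
      ring
end

section
/- Let ℓ be a natural number. The number of 6-tuples (A,B,C,D,E,F) of pairwise distinct elements of [ℓ] satisfying A + B = C + D = E + F equals (ℓ⁴ − 10ℓ³ + 32ℓ² − 32ℓ)/2 if ℓ is even, and (ℓ⁴ − 10ℓ³ + 32ℓ² − 38ℓ + 15)/2 if ℓ is odd. -/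
open scoped BigOperators
open Finset

namespace CS

def Ps (l s : ℕ) : Finset (ℕ × ℕ) :=
  (Finset.range l ×ˢ Finset.range l).filter (fun p => p.1 ≠ p.2 ∧ p.1 + p.2 = s)

def rr (l s : ℕ) : ℕ := (Ps l s).card

def g (a : ℕ) : ℕ := a * ((a - 2) * (a - 4))

def disj (p q : ℕ × ℕ) : Prop := p.1 ≠ q.1 ∧ p.1 ≠ q.2 ∧ p.2 ≠ q.1 ∧ p.2 ≠ q.2

instance : ∀ p q, Decidable (disj p q) := fun p q => by unfold disj; infer_instance

lemma mem_Ps {l s : ℕ} {p : ℕ × ℕ} :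
    p ∈ Ps l s ↔ p.1 < l ∧ p.2 < l ∧ p.1 ≠ p.2 ∧ p.1 + p.2 = s := by
  simp [Ps, and_assoc]

def sw (p : ℕ × ℕ) : ℕ × ℕ := (p.2, p.1)

lemma sw_mem {l s : ℕ} {p : ℕ × ℕ} (hp : p ∈ Ps l s) : sw p ∈ Ps l s := by
  simp only [mem_Ps, sw] at hp ⊢
  exact ⟨hp.2.1, hp.1, fun h => hp.2.2.1 h.symm, by omega⟩

lemma sw_ne {l s : ℕ} {p : ℕ × ℕ} (hp : p ∈ Ps l s) : sw p ≠ p := by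
  rw [mem_Ps] at hp
  intro h
  rw [Prod.ext_iff] at h
  simp only [sw] at h
  exact hp.2.2.1 (h.1.symm)

lemma sw_sw (p : ℕ × ℕ) : sw (sw p) = p := rfl

lemma sw_inj {p q : ℕ × ℕ} (h : sw p = sw q) : p = q := by
  simp [sw, Prod.ext_iff] at h ⊢; tauto

lemma disj_iff {l s : ℕ} {p q : ℕ × ℕ} (hp : p ∈ Ps l s) (hq : q ∈ Ps l s) :
    disj p q ↔ q ≠ p ∧ q ≠ sw p := by
  rw [mem_Ps] at hp hq
  constructor
  · rintro ⟨h1, h2, h3, h4⟩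
    constructor
    · intro h; subst h; exact h1 rfl
    · intro h; subst h; exact h2 rfl
  · rintro ⟨h1, h2⟩
    refine ⟨?_, ?_, ?_, ?_⟩ <;> intro h
    · exact h1 (Prod.ext h.symm (by omega))
    · exact h2 (Prod.ext_iff.2 ⟨by simp [sw]; omega, by simp [sw]; omega⟩)
    · exact h2 (Prod.ext_iff.2 ⟨by simp [sw]; omega, by simp [sw]; omega⟩)
    · exact h1 (Prod.ext_iff.2 ⟨by omega, by omega⟩)

def T (l s : ℕ) : Finset ((ℕ × ℕ) × (ℕ × ℕ) × (ℕ × ℕ)) :=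
  (Ps l s ×ˢ Ps l s ×ˢ Ps l s).filter
    (fun x => disj x.1 x.2.1 ∧ disj x.1 x.2.2 ∧ disj x.2.1 x.2.2)

lemma filter_pq_eq {l s : ℕ} {p q : ℕ × ℕ} (hp : p ∈ Ps l s) (hq : q ∈ Ps l s)
    (h1 : q ≠ p) (h2 : q ≠ sw p) :
    ((Ps l s ×ˢ Ps l s ×ˢ Ps l s).filter
      (fun x => ((disj x.1 x.2.1 ∧ disj x.1 x.2.2 ∧ disj x.2.1 x.2.2) ∧ x.1 = p) ∧ x.2.1 = q)) =
    {p} ×ˢ {q} ×ˢ (((((Ps l s).erase p).erase (sw p)).erase q).erase (sw q)) := by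
  ext x
  obtain ⟨a, b, c⟩ := x
  simp only [Finset.mem_filter, Finset.mem_product, Finset.mem_erase, Finset.mem_singleton]
  constructor
  · rintro ⟨⟨ha, hb, hc⟩, ⟨⟨d1, d2, d3⟩, rfl⟩, rfl⟩
    rw [disj_iff ha hc] at d2
    rw [disj_iff hb hc] at d3
    exact ⟨rfl, rfl, d3.2, d3.1, d2.2, d2.1, hc⟩
  · rintro ⟨rfl, rfl, e1, e2, e3, e4, hc⟩
    exact ⟨⟨hp, hq, hc⟩, ⟨⟨(disj_iff hp hq).2 ⟨h1, h2⟩, (disj_iff hp hc).2 ⟨e4, e3⟩,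
      (disj_iff hq hc).2 ⟨e2, e1⟩⟩, rfl⟩, rfl⟩

lemma card_filter_pq {l s : ℕ} {p q : ℕ × ℕ} (hp : p ∈ Ps l s) (hq : q ∈ Ps l s)
    (h1 : q ≠ p) (h2 : q ≠ sw p) :
    ((Ps l s ×ˢ Ps l s ×ˢ Ps l s).filter
      (fun x => ((disj x.1 x.2.1 ∧ disj x.1 x.2.2 ∧ disj x.2.1 x.2.2) ∧ x.1 = p) ∧ x.2.1 = q)).card
    = rr l s - 4 := by
  rw [filter_pq_eq hp hq h1 h2]
  have m1 : sw p ∈ (Ps l s).erase p := mem_erase.2 ⟨sw_ne hp, sw_mem hp⟩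
  have m2 : q ∈ ((Ps l s).erase p).erase (sw p) :=
    mem_erase.2 ⟨h2, mem_erase.2 ⟨h1, hq⟩⟩
  have m3 : sw q ∈ (((Ps l s).erase p).erase (sw p)).erase q := by
    refine mem_erase.2 ⟨sw_ne hq, mem_erase.2 ⟨?_, mem_erase.2 ⟨?_, sw_mem hq⟩⟩⟩
    · intro h; exact h1 (sw_inj h)
    · intro h; apply h2; rw [← sw_sw q, h]
  rw [card_product, card_product, card_singleton, card_singleton,
    card_erase_of_mem m3, card_erase_of_mem m2, card_erase_of_mem m1,
    card_erase_of_mem hp]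
  unfold rr; omega

lemma filter_pq_empty {l s : ℕ} {p q : ℕ × ℕ} (hp : p ∈ Ps l s) (hq : q ∈ Ps l s)
    (h : q = p ∨ q = sw p) :
    ((Ps l s ×ˢ Ps l s ×ˢ Ps l s).filter
      (fun x => ((disj x.1 x.2.1 ∧ disj x.1 x.2.2 ∧ disj x.2.1 x.2.2) ∧ x.1 = p) ∧ x.2.1 = q))
    = ∅ := by
  rw [Finset.filter_eq_empty_iff]
  rintro ⟨a, b, c⟩ hx
  simp only [Finset.mem_product] at hx
  rintro ⟨⟨⟨d1, d2, d3⟩, rfl⟩, rfl⟩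
  rw [disj_iff hp hq] at d1
  rcases h with h | h
  · exact d1.1 h
  · exact d1.2 h

lemma erase_filter_eq {l s : ℕ} (p : ℕ × ℕ) :
    ((Ps l s).filter (fun q => ¬(q = p ∨ q = sw p))) = ((Ps l s).erase p).erase (sw p) := by
  ext q
  simp only [Finset.mem_filter, Finset.mem_erase]
  tauto

lemma card_fiber1 {l s : ℕ} {p : ℕ × ℕ} (hp : p ∈ Ps l s) :
    ((Ps l s ×ˢ Ps l s ×ˢ Ps l s).filter
      (fun x => (disj x.1 x.2.1 ∧ disj x.1 x.2.2 ∧ disj x.2.1 x.2.2) ∧ x.1 = p)).card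
    = (rr l s - 2) * (rr l s - 4) := by
  have hmaps : ∀ x ∈ (Ps l s ×ˢ Ps l s ×ˢ Ps l s).filter
      (fun x => (disj x.1 x.2.1 ∧ disj x.1 x.2.2 ∧ disj x.2.1 x.2.2) ∧ x.1 = p),
      x.2.1 ∈ Ps l s := by
    intro x hx
    have := (Finset.mem_filter.1 hx).1
    rw [Finset.mem_product] at this
    exact (Finset.mem_product.1 this.2).1
  rw [Finset.card_eq_sum_card_fiberwise (f := fun x => x.2.1) (t := Ps l s) (fun x hx => hmaps x hx)]
  have step : ∀ q ∈ Ps l s,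
      (((Ps l s ×ˢ Ps l s ×ˢ Ps l s).filter
        (fun x => (disj x.1 x.2.1 ∧ disj x.1 x.2.2 ∧ disj x.2.1 x.2.2) ∧ x.1 = p)).filter
        (fun x => x.2.1 = q)).card
      = if q = p ∨ q = sw p then 0 else rr l s - 4 := by
    intro q hq
    rw [Finset.filter_filter]
    split_ifs with h
    · rw [filter_pq_empty hp hq h, Finset.card_empty]
    · push_neg at h
      exact card_filter_pq hp hq h.1 h.2
  rw [Finset.sum_congr rfl step, Finset.sum_ite, Finset.sum_const_zero,
    Finset.sum_const, zero_add, erase_filter_eq, smul_eq_mul]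
  have m1 : sw p ∈ (Ps l s).erase p := Finset.mem_erase.2 ⟨sw_ne hp, sw_mem hp⟩
  rw [Finset.card_erase_of_mem m1, Finset.card_erase_of_mem hp]
  unfold rr
  congr 1

lemma card_T (l s : ℕ) : (T l s).card = g (rr l s) := by
  have hmaps : ∀ x ∈ T l s, x.1 ∈ Ps l s := by
    intro x hx
    have := (Finset.mem_filter.1 hx).1
    rw [Finset.mem_product] at this
    exact this.1
  rw [T, Finset.card_eq_sum_card_fiberwise (f := fun x => x.1) (t := Ps l s)
    (by intro x hx; exact hmaps x (by exact hx))]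
  have step : ∀ p ∈ Ps l s,
      (((Ps l s ×ˢ Ps l s ×ˢ Ps l s).filter
        (fun x => disj x.1 x.2.1 ∧ disj x.1 x.2.2 ∧ disj x.2.1 x.2.2)).filter
        (fun x => x.1 = p)).card = (rr l s - 2) * (rr l s - 4) := by
    intro p hp
    rw [Finset.filter_filter]
    exact card_fiber1 hp
  rw [Finset.sum_congr rfl step, Finset.sum_const, smul_eq_mul]
  rfl

def W (l : ℕ) : Finset ((ℕ × ℕ) × (ℕ × ℕ) × (ℕ × ℕ)) :=
  ((Finset.range l ×ˢ Finset.range l) ×ˢ (Finset.range l ×ˢ Finset.range l) ×ˢ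
      (Finset.range l ×ˢ Finset.range l)).filter
    (fun x => (x.1.1 ≠ x.1.2 ∧ x.2.1.1 ≠ x.2.1.2 ∧ x.2.2.1 ≠ x.2.2.2 ∧
       disj x.1 x.2.1 ∧ disj x.1 x.2.2 ∧ disj x.2.1 x.2.2) ∧
       x.1.1 + x.1.2 = x.2.1.1 + x.2.1.2 ∧ x.2.1.1 + x.2.1.2 = x.2.2.1 + x.2.2.2)

lemma W_fiber (l s : ℕ) :
    (W l).filter (fun x => x.1.1 + x.1.2 = s) = T l s := by
  ext x
  obtain ⟨⟨a, b⟩, ⟨c, d⟩, ⟨e, f⟩⟩ := x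
  simp only [W, T, Finset.mem_filter, Finset.mem_product, Finset.mem_range, mem_Ps]
  simp only [disj]
  omega

lemma W_card (l : ℕ) : (W l).card = ∑ s ∈ Finset.range (2 * l - 1), g (rr l s) := by
  have hmaps : ∀ x ∈ W l, x.1.1 + x.1.2 ∈ Finset.range (2 * l - 1) := by
    intro x hx
    have := (Finset.mem_filter.1 hx).1
    rw [Finset.mem_product] at this
    have h1 := this.1
    rw [Finset.mem_product] at h1
    simp only [Finset.mem_range] at h1 ⊢
    omega
  rw [Finset.card_eq_sum_card_fiberwise (fun x hx => hmaps x hx)]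
  refine Finset.sum_congr rfl fun s _ => ?_
  rw [W_fiber, card_T]

def S (l : ℕ) : ℕ := ∑ s ∈ Finset.range (2 * l - 1), g (rr l s)

lemma Ps_stable {l s : ℕ} (h : s < l) : Ps (l + 1) s = Ps l s := by
  ext p
  simp only [mem_Ps]
  omega

lemma rr_shift {l s : ℕ} (h : l + 1 ≤ s) : rr (l + 1) s = rr l (s - 2) := by
  apply Finset.card_nbij' (i := fun p => (p.1 - 1, p.2 - 1)) (j := fun t => (t.1 + 1, t.2 + 1))
  · intro p hp
    simp only [Finset.mem_coe, mem_Ps] at hp ⊢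
    omega
  · intro t ht
    simp only [Finset.mem_coe, mem_Ps] at ht ⊢
    omega
  · intro p hp
    simp only [Finset.mem_coe, mem_Ps] at hp
    have : 1 ≤ p.1 ∧ 1 ≤ p.2 := by omega
    ext <;> simp <;> omega
  · intro t ht
    ext <;> simp

lemma rr_mid (m : ℕ) :
    rr m (m - 1) = ((Finset.range m).filter (fun a => 2 * a ≠ m - 1)).card := by
  apply Finset.card_nbij' (i := fun p => p.1) (j := fun a => (a, m - 1 - a))
  · intro p hp
    simp only [Finset.mem_coe, mem_Ps] at hp
    simp only [Finset.mem_coe, Finset.mem_filter, Finset.mem_range]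
    omega
  · intro a ha
    simp only [Finset.mem_coe, Finset.mem_filter, Finset.mem_range] at ha
    simp only [Finset.mem_coe, mem_Ps]
    omega
  · intro p hp
    simp only [Finset.mem_coe, mem_Ps] at hp
    ext <;> simp <;> omega
  · intro a ha
    rfl

lemma rr_mid_even {m : ℕ} (hm : Even m) : rr m (m - 1) = m := by
  obtain ⟨k, hk⟩ := hm
  rw [rr_mid]
  have : (Finset.range m).filter (fun a => 2 * a ≠ m - 1) = Finset.range m :=
    Finset.filter_true_of_mem (fun a ha => by
      have := Finset.mem_range.1 ha
      show 2 * a ≠ m - 1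
      omega)
  rw [this, Finset.card_range]

lemma rr_mid_odd {m : ℕ} (hm : Odd m) : rr m (m - 1) = m - 1 := by
  obtain ⟨k, hk⟩ := hm
  rw [rr_mid]
  have : (Finset.range m).filter (fun a => 2 * a ≠ m - 1) = (Finset.range m).erase k := by
    ext a
    simp only [Finset.mem_filter, Finset.mem_range, Finset.mem_erase]
    omega
  rw [this, Finset.card_erase_of_mem (by simp [Finset.mem_range]; omega), Finset.card_range]

lemma S_rec (k : ℕ) :
    S (k + 2) = S (k + 1) + g (rr (k + 1) k) + g (rr (k + 2) (k + 1)) := by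
  unfold S
  have h1 : 2 * (k + 2) - 1 = 2 * k + 3 := by omega
  have h2 : 2 * (k + 1) - 1 = 2 * k + 1 := by omega
  rw [h1, h2]
  have hA : ∑ s ∈ Finset.range (2 * k + 3), g (rr (k + 2) s) =
      (∑ s ∈ Finset.Ico 0 (k + 1), g (rr (k + 2) s)) +
        ∑ s ∈ Finset.Ico (k + 1) (2 * k + 3), g (rr (k + 2) s) := by
    rw [Finset.range_eq_Ico,
      ← Finset.sum_Ico_consecutive (fun s => g (rr (k + 2) s)) (Nat.zero_le (k + 1)) (by omega)]
  have hB : ∑ s ∈ Finset.Ico 0 (k + 1), g (rr (k + 2) s) =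
      (∑ s ∈ Finset.Ico 0 k, g (rr (k + 1) s)) + g (rr (k + 1) k) := by
    rw [Finset.sum_Ico_succ_top (Nat.zero_le k)]
    congr 1
    · refine Finset.sum_congr rfl fun s hs => ?_
      simp only [Finset.mem_Ico] at hs
      rw [show rr (k + 2) s = rr (k + 1) s from by
        unfold rr; rw [Ps_stable (by omega)]]
    · rw [show rr (k + 2) k = rr (k + 1) k from by
        unfold rr; rw [Ps_stable (by omega)]]
  have hC : ∑ s ∈ Finset.Ico (k + 1) (2 * k + 3), g (rr (k + 2) s) =
      g (rr (k + 2) (k + 1)) + ∑ s ∈ Finset.Ico k (2 * k + 1), g (rr (k + 1) s) := by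
    rw [Finset.sum_eq_sum_Ico_succ_bot (by omega)]
    congr 1
    rw [Finset.sum_Ico_eq_sum_range, Finset.sum_Ico_eq_sum_range]
    have h3 : 2 * k + 3 - (k + 1 + 1) = k + 1 := by omega
    have h4 : 2 * k + 1 - k = k + 1 := by omega
    rw [h3, h4]
    refine Finset.sum_congr rfl fun i _ => ?_
    rw [rr_shift (by omega)]
    congr 2
    omega
  have hD : ∑ s ∈ Finset.range (2 * k + 1), g (rr (k + 1) s) =
      (∑ s ∈ Finset.Ico 0 k, g (rr (k + 1) s)) +
        ∑ s ∈ Finset.Ico k (2 * k + 1), g (rr (k + 1) s) := by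
    rw [Finset.range_eq_Ico,
      ← Finset.sum_Ico_consecutive (fun s => g (rr (k + 1) s)) (Nat.zero_le k) (by omega)]
  omega

lemma g_cast {a : ℕ} (ha : Even a) :
    (g a : ℚ) = (a : ℚ) * (((a : ℚ) - 2) * ((a : ℚ) - 4)) := by
  obtain ⟨k, rfl⟩ := ha
  match k with
  | 0 => norm_num [g]
  | 1 => norm_num [g]
  | (k + 2) =>
    unfold g
    rw [Nat.cast_mul, Nat.cast_mul, Nat.cast_sub (by omega), Nat.cast_sub (by omega)]
    push_cast
    ring

lemma S_one : S 1 = 0 := by decide +kernel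

lemma key (l : ℕ) :
    (Even l → (S l : ℚ) = ((l : ℚ) ^ 4 - 10 * (l : ℚ) ^ 3 + 32 * (l : ℚ) ^ 2 - 32 * l) / 2) ∧
    (Odd l → (S l : ℚ) = ((l : ℚ) ^ 4 - 10 * (l : ℚ) ^ 3 + 32 * (l : ℚ) ^ 2 - 38 * l + 15) / 2) := by
  induction l with
  | zero =>
    constructor
    · intro _; norm_num [S]
    · intro h; exact absurd h (by decide)
  | succ n ih =>
    match n, ih with
    | 0, _ =>
      constructor
      · intro h; exact absurd h (by decide)
      · intro _; rw [S_one]; norm_num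
    | (m + 1), ih =>
      have hrec := S_rec m
      rcases Nat.even_or_odd (m + 1) with he | ho
      · -- m+1 even, so m+2 odd
        have h1 : rr (m + 1) m = m + 1 := rr_mid_even he
        have h2 : rr (m + 2) (m + 1) = m + 1 := rr_mid_odd (by
          rcases he with ⟨k, hk⟩; exact ⟨k, by omega⟩)
        rw [h1, h2] at hrec
        have hS := ih.1 he
        constructor
        · intro h
          exfalso
          rcases he with ⟨k, hk⟩; rcases h with ⟨j, hj⟩; omega
        · intro _
          rw [hrec]
          push_cast [hS, g_cast he]
          ring
      · -- m+1 odd, so m even and m+2 even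
        have hm : Even m := by rcases ho with ⟨k, hk⟩; exact ⟨k, by omega⟩
        have hm2 : Even (m + 2) := by rcases hm with ⟨k, hk⟩; exact ⟨k + 1, by omega⟩
        have h1 : rr (m + 1) m = m := rr_mid_odd ho
        have h2 : rr (m + 2) (m + 1) = m + 2 := rr_mid_even hm2
        rw [h1, h2] at hrec
        have hS := ih.2 ho
        constructor
        · intro _
          rw [hrec]
          push_cast [hS, g_cast hm, g_cast hm2]
          ring
        · intro h
          exfalso
          rcases ho with ⟨k, hk⟩; rcases h with ⟨j, hj⟩; omega

lemma sext_card (l : ℕ) :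
    ((Finset.range l ×ˢ Finset.range l ×ˢ Finset.range l ×ˢ
        Finset.range l ×ˢ Finset.range l ×ˢ Finset.range l).filter
      (fun x =>
        let A := x.1; let B := x.2.1; let C := x.2.2.1
        let D := x.2.2.2.1; let E := x.2.2.2.2.1; let F := x.2.2.2.2.2
        A ≠ B ∧ A ≠ C ∧ A ≠ D ∧ A ≠ E ∧ A ≠ F ∧ B ≠ C ∧ B ≠ D ∧ B ≠ E ∧ B ≠ F ∧
        C ≠ D ∧ C ≠ E ∧ C ≠ F ∧ D ≠ E ∧ D ≠ F ∧ E ≠ F ∧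
        A + B = C + D ∧ C + D = E + F)).card = (W l).card := by
  apply Finset.card_nbij'
    (i := fun x => ((x.1, x.2.1), (x.2.2.1, x.2.2.2.1), (x.2.2.2.2.1, x.2.2.2.2.2)))
    (j := fun y => (y.1.1, y.1.2, y.2.1.1, y.2.1.2, y.2.2.1, y.2.2.2))
  · intro x hx
    obtain ⟨A, B, C, D, E, F⟩ := x
    simp only [Finset.mem_coe, Finset.mem_filter, Finset.mem_product, Finset.mem_range] at hx
    simp only [Finset.mem_coe, W, Finset.mem_filter, Finset.mem_product, Finset.mem_range]
    simp only [disj]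
    tauto
  · intro y hy
    obtain ⟨⟨A, B⟩, ⟨C, D⟩, ⟨E, F⟩⟩ := y
    simp only [Finset.mem_coe, W, Finset.mem_filter, Finset.mem_product, Finset.mem_range] at hy
    simp only [disj] at hy
    simp only [Finset.mem_coe, Finset.mem_filter, Finset.mem_product, Finset.mem_range]
    tauto
  · intro x _
    obtain ⟨A, B, C, D, E, F⟩ := x
    rfl
  · intro y _
    obtain ⟨⟨A, B⟩, ⟨C, D⟩, ⟨E, F⟩⟩ := y
    rfl

end CS

open scoped BigOperators


/-- The count of 6-tuples `(A,B,C,D,E,F)` of pairwise distinct elements of `[ℓ]`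
with `A + B = C + D = E + F`. -/
theorem count_sextuples_equal_sums (ℓ : ℕ) :
    let N := ((Finset.range ℓ ×ˢ Finset.range ℓ ×ˢ Finset.range ℓ ×ˢ
        Finset.range ℓ ×ˢ Finset.range ℓ ×ˢ Finset.range ℓ).filter
      (fun x =>
        let A := x.1; let B := x.2.1; let C := x.2.2.1
        let D := x.2.2.2.1; let E := x.2.2.2.2.1; let F := x.2.2.2.2.2
        A ≠ B ∧ A ≠ C ∧ A ≠ D ∧ A ≠ E ∧ A ≠ F ∧ B ≠ C ∧ B ≠ D ∧ B ≠ E ∧ B ≠ F ∧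
        C ≠ D ∧ C ≠ E ∧ C ≠ F ∧ D ≠ E ∧ D ≠ F ∧ E ≠ F ∧
        A + B = C + D ∧ C + D = E + F)).card
    (Even ℓ →
      (N : ℚ) = ((ℓ : ℚ) ^ 4 - 10 * (ℓ : ℚ) ^ 3 + 32 * (ℓ : ℚ) ^ 2 - 32 * ℓ) / 2) ∧
    (Odd ℓ →
      (N : ℚ) = ((ℓ : ℚ) ^ 4 - 10 * (ℓ : ℚ) ^ 3 + 32 * (ℓ : ℚ) ^ 2 - 38 * ℓ + 15) / 2) := by
  intro N
  have hN : (N : ℚ) = (CS.S ℓ : ℚ) := by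
    have h1 : N = (CS.W ℓ).card := CS.sext_card ℓ
    have h2 : (CS.W ℓ).card = CS.S ℓ := CS.W_card ℓ
    rw [h1, h2]
  rw [hN]
  exact CS.key ℓ
end
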